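/- arXiv:2006.15981 — 3 statements merged into one kernel-verified Lean document; each statement's English description precedes it below -/
import Mathlib

section
/- Let g ∈ L²(ℝ). For every ε > 0 there exists δ ∈ (0, 1/2) and a constant C > 0 (independent of g, x, t, ε) such that for all x ∈ ℝ and all t ∈ ℝ, |∫_{|ξ|≤8} e^{ixξ}(e^{it(ξ³+1/ξ)} − 1) ĝ(ξ) dξ| ≤ ε + (C|t|/δ)·‖g‖_{L²}. -/
/-!
Split the frequency window `|ξ| ≤ 8` at `|ξ| = δ`. On `|ξ| ≤ δ` use `|e^{iθ} - 1| ≤ 2`; by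
Cauchy–Schwarz this piece is at most `2 √(2δ) ‖ĝ‖₂`, which is `≤ ε` once `δ` is small. On
`δ < |ξ| ≤ 8` the phase satisfies `|t (ξ³ + 1/ξ)| ≤ 513 |t| / δ`, so `|e^{iθ} - 1| ≤ |θ|` and
Cauchy–Schwarz on `[-8, 8]` bound this piece by `2052 |t| / δ · ‖ĝ‖₂`. Plancherel turns `‖ĝ‖₂`
into `‖g‖₂`.
-/

open MeasureTheory Complex Real

theorem norm_exp_I_mul_ofReal_sub_one_le_two (θ : ℝ) : ‖exp (I * θ) - 1‖ ≤ 2 := by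
  rw [norm_exp_I_mul_ofReal_sub_one, norm_mul, Real.norm_two, Real.norm_eq_abs]
  nlinarith [abs_sin_le_one (θ / 2)]

section LpBounds

variable {α E : Type*} [MeasurableSpace α] [NormedAddCommGroup E] {μ : Measure α} {s : Set α}

theorem MeasureTheory.MemLp.integrableOn_of_measure_lt_top {f : α → E} (hf : MemLp f 2 μ)
    (hs : μ s < ⊤) :
    IntegrableOn f s μ :=
  haveI : Fact (μ s < ⊤) := ⟨hs⟩
  (hf.restrict s).integrable one_le_two

theorem setIntegral_norm_le_of_memLp_two {f : α → E} (hf : MemLp f 2 μ) (hs : μ s < ⊤) :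
    ∫ x in s, ‖f x‖ ∂μ ≤ μ.real s ^ (1 / 2 : ℝ) * (∫ x, ‖f x‖ ^ 2 ∂μ) ^ (1 / 2 : ℝ) := by
  have : Fact (μ s < ⊤) := ⟨hs⟩
  have hconj : (2 : ℝ).HolderConjugate 2 := .two_two
  have hholder := integral_mul_le_Lp_mul_Lq_of_nonneg (μ := μ.restrict s) hconj
    (Filter.Eventually.of_forall fun _ => zero_le_one)
    (Filter.Eventually.of_forall fun x => norm_nonneg (f x))
    (memLp_const 1) (by simpa using (hf.restrict s).norm)
  have hsq : ∫ x in s, ‖f x‖ ^ (2 : ℝ) ∂μ ≤ ∫ x, ‖f x‖ ^ 2 ∂μ := by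
    simp only [Real.rpow_two]
    refine setIntegral_le_integral (hf.integrable_norm_pow two_ne_zero)
      (Filter.Eventually.of_forall fun x => by positivity)
  calc ∫ x in s, ‖f x‖ ∂μ ≤ (∫ x in s, (1 : ℝ) ^ (2 : ℝ) ∂μ) ^ (1 / 2 : ℝ) *
        (∫ x in s, ‖f x‖ ^ (2 : ℝ) ∂μ) ^ (1 / 2 : ℝ) := by simpa using hholder
    _ ≤ μ.real s ^ (1 / 2 : ℝ) * (∫ x, ‖f x‖ ^ 2 ∂μ) ^ (1 / 2 : ℝ) := by
        simp only [Real.one_rpow, integral_const, smul_eq_mul, mul_one,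
          measureReal_restrict_apply_univ]
        gcongr

end LpBounds

theorem norm_setIntegral_le_of_norm_le_indicator_add {α E : Type*} [MeasurableSpace α]
    [NormedAddCommGroup E] [NormedSpace ℝ E] {μ : Measure α} {s a : Set α} (ha : MeasurableSet a)
    (has : a ⊆ s) {F : α → E} {f : α → ℝ} (hf : IntegrableOn f s μ) (c₁ c₂ : ℝ)
    (hF : ∀ᵐ x ∂μ.restrict s, ‖F x‖ ≤ a.indicator (fun x => c₁ * f x) x + c₂ * f x) :
    ‖∫ x in s, F x ∂μ‖ ≤ c₁ * (∫ x in a, f x ∂μ) + c₂ * ∫ x in s, f x ∂μ := by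
  calc ‖∫ x in s, F x ∂μ‖
      ≤ ∫ x in s, (a.indicator (fun x => c₁ * f x) x + c₂ * f x) ∂μ :=
        norm_integral_le_of_norm_le (((hf.const_mul c₁).indicator ha).add (hf.const_mul c₂)) hF
    _ = c₁ * (∫ x in a, f x ∂μ) + c₂ * ∫ x in s, f x ∂μ := by
        rw [integral_add ((hf.const_mul c₁).indicator ha) (hf.const_mul c₂),
          setIntegral_indicator ha, Set.inter_eq_right.mpr has, integral_const_mul,
          integral_const_mul]

theorem setOf_abs_le_eq_Icc (r : ℝ) : {ξ : ℝ | |ξ| ≤ r} = Set.Icc (-r) r := by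
  ext; simp [abs_le]

theorem measurableSet_setOf_abs_le (r : ℝ) : MeasurableSet {ξ : ℝ | |ξ| ≤ r} :=
  setOf_abs_le_eq_Icc r ▸ measurableSet_Icc

theorem volume_real_setOf_abs_le {r : ℝ} (hr : 0 ≤ r) :
    volume.real {ξ : ℝ | |ξ| ≤ r} = 2 * r := by
  rw [setOf_abs_le_eq_Icc, Real.volume_real_Icc, max_eq_left (by linarith)]
  ring

theorem volume_setOf_abs_le_lt_top (r : ℝ) : volume {ξ : ℝ | |ξ| ≤ r} < ⊤ := by
  rw [setOf_abs_le_eq_Icc, Real.volume_Icc]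
  exact ENNReal.ofReal_lt_top

theorem abs_cube_add_inv_le {δ ξ : ℝ} (hδ : 0 < δ) (hδ₁ : δ ≤ 1) (hδξ : δ ≤ |ξ|) (hξ : |ξ| ≤ 8) :
    |ξ ^ 3 + 1 / ξ| ≤ 513 / δ := by
  have hcube : |ξ ^ 3| ≤ 512 / δ := by
    rw [abs_pow, le_div_iff₀ hδ]
    calc |ξ| ^ 3 * δ ≤ 8 ^ 3 * 1 := by gcongr
      _ = 512 := by norm_num
  have hinv : |1 / ξ| ≤ 1 / δ := by
    rw [abs_div, abs_one]; exact one_div_le_one_div_of_le hδ hδξ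
  calc |ξ ^ 3 + 1 / ξ| ≤ |ξ ^ 3| + |1 / ξ| := abs_add_le _ _
    _ ≤ 512 / δ + 1 / δ := add_le_add hcube hinv
    _ = 513 / δ := by ring

theorem norm_ostrovsky_integrand_le {δ : ℝ} (hδ : 0 < δ) (hδ₁ : δ ≤ 1) (x t : ℝ) (ghat : ℝ → ℂ)
    {ξ : ℝ} (hξ : |ξ| ≤ 8) :
    ‖Complex.exp (I * x * ξ) * (Complex.exp (I * t * (ξ ^ 3 + 1 / ξ)) - 1) * ghat ξ‖ ≤
      {ξ : ℝ | |ξ| ≤ δ}.indicator (fun ξ => 2 * ‖ghat ξ‖) ξ + 513 * |t| / δ * ‖ghat ξ‖ := by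
  have hx : I * x * ξ = I * ((x * ξ : ℝ) : ℂ) := by push_cast; ring
  have ht : I * t * ((ξ : ℂ) ^ 3 + 1 / ξ) = I * ((t * (ξ ^ 3 + 1 / ξ) : ℝ) : ℂ) := by
    push_cast; ring
  rw [norm_mul, norm_mul, hx, ht, norm_exp_I_mul_ofReal, one_mul]
  by_cases hξδ : |ξ| ≤ δ
  · rw [Set.indicator_of_mem (s := {ξ : ℝ | |ξ| ≤ δ}) hξδ]
    refine le_add_of_le_of_nonneg ?_ (by positivity)
    gcongr
    exact norm_exp_I_mul_ofReal_sub_one_le_two _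
  · rw [Set.indicator_of_notMem (s := {ξ : ℝ | |ξ| ≤ δ}) hξδ, zero_add]
    gcongr
    calc ‖Complex.exp (I * ((t * (ξ ^ 3 + 1 / ξ) : ℝ) : ℂ)) - 1‖ ≤ |t * (ξ ^ 3 + 1 / ξ)| :=
          Real.norm_exp_I_mul_ofReal_sub_one_le
      _ = |t| * |ξ ^ 3 + 1 / ξ| := abs_mul _ _
      _ ≤ |t| * (513 / δ) := by gcongr; exact abs_cube_add_inv_le hδ hδ₁ (le_of_not_ge hξδ) hξ
      _ = 513 * |t| / δ := by ring

theorem exists_pos_lt_half_two_mul_rpow_mul_le {ε : ℝ} (hε : 0 < ε) (N : ℝ) :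
    ∃ δ : ℝ, 0 < δ ∧ δ < 1 / 2 ∧ 2 * (2 * δ) ^ (1 / 2 : ℝ) * N ≤ ε := by
  have hcont : Continuous fun δ : ℝ => 2 * (2 * δ) ^ (1 / 2 : ℝ) * N := by
    have := Real.continuous_rpow_const (q := 1 / 2) (by norm_num)
    fun_prop
  have hlim : Filter.Tendsto (fun δ : ℝ => 2 * (2 * δ) ^ (1 / 2 : ℝ) * N)
      (nhdsWithin 0 (Set.Ioi 0)) (nhds 0) := by
    simpa using (hcont.tendsto 0).mono_left nhdsWithin_le_nhds
  obtain ⟨δ, hδ_small, hδ⟩ :=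
    ((hlim.eventually (Iic_mem_nhds hε)).and (Ioo_mem_nhdsGT (by norm_num : (0 : ℝ) < 1 / 2))).exists
  exact ⟨δ, hδ.1, hδ.2, hδ_small⟩

/-- Low-frequency estimate (Lemma 2.2) for the free Ostrovsky propagator:
for `g ∈ L²(ℝ)` with Fourier transform `ĝ`, for every `ε > 0` there exists
`δ ∈ (0, 1/2)` and a constant `C > 0` independent of `g, x, t, ε` such that
`|∫_{|ξ|≤8} e^{ixξ}(e^{it(ξ³+1/ξ)} − 1) ĝ(ξ) dξ| ≤ ε + (C|t|/δ)·‖g‖_{L²}`. -/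
theorem stmt3 :
    ∃ C : ℝ, 0 < C ∧
      ∀ g ghat : ℝ → ℂ, MemLp g 2 (volume : Measure ℝ) →
        MemLp ghat 2 (volume : Measure ℝ) →
        (∫ ξ : ℝ, ‖ghat ξ‖ ^ 2) = ∫ x : ℝ, ‖g x‖ ^ 2 →
        ∀ ε : ℝ, 0 < ε → ∃ δ : ℝ, 0 < δ ∧ δ < 1 / 2 ∧
          ∀ x t : ℝ,
            ‖∫ ξ in {ξ : ℝ | |ξ| ≤ 8},
                Complex.exp (Complex.I * x * ξ) *
                  (Complex.exp (Complex.I * t * (ξ ^ 3 + 1 / ξ)) - 1) * ghat ξ‖ ≤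
              ε + C * |t| / δ * ((∫ x : ℝ, ‖g x‖ ^ 2) ^ ((1 : ℝ) / 2)) := by
  refine ⟨2052, by norm_num, fun g ghat _ hghat hplancherel ε hε => ?_⟩
  rw [← hplancherel]
  set N := (∫ ξ, ‖ghat ξ‖ ^ 2) ^ ((1 : ℝ) / 2)
  obtain ⟨δ, hδ, hδ_half, hδ_small⟩ := exists_pos_lt_half_two_mul_rpow_mul_le hε N
  refine ⟨δ, hδ, hδ_half, fun x t => ?_⟩
  have hsub : {ξ : ℝ | |ξ| ≤ δ} ⊆ {ξ : ℝ | |ξ| ≤ 8} :=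
    Set.ofPred_subset_ofPred.mpr fun _ hξ => hξ.trans (by linarith)
  have hsqrt16 : (2 * 8 : ℝ) ^ (1 / 2 : ℝ) = 4 := by
    rw [show (2 * 8 : ℝ) = 4 ^ (2 : ℝ) by norm_num, ← Real.rpow_mul (by norm_num)]; norm_num
  calc _ ≤ 2 * (∫ ξ in {ξ : ℝ | |ξ| ≤ δ}, ‖ghat ξ‖) +
          513 * |t| / δ * ∫ ξ in {ξ : ℝ | |ξ| ≤ 8}, ‖ghat ξ‖ :=
        norm_setIntegral_le_of_norm_le_indicator_add (measurableSet_setOf_abs_le δ) hsub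
          (hghat.integrableOn_of_measure_lt_top (volume_setOf_abs_le_lt_top 8)).norm _ _
          ((ae_restrict_mem (measurableSet_setOf_abs_le 8)).mono fun ξ hξ =>
            norm_ostrovsky_integrand_le hδ (by linarith) x t ghat hξ)
    _ ≤ 2 * ((2 * δ) ^ (1 / 2 : ℝ) * N) + 513 * |t| / δ * (4 * N) := by
        gcongr
        · simpa only [volume_real_setOf_abs_le hδ.le] using
            setIntegral_norm_le_of_memLp_two hghat (volume_setOf_abs_le_lt_top δ)
        · simpa only [volume_real_setOf_abs_le (by norm_num : (0 : ℝ) ≤ 8), hsqrt16] using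
            setIntegral_norm_le_of_memLp_two hghat (volume_setOf_abs_le_lt_top 8)
    _ = 2 * (2 * δ) ^ (1 / 2 : ℝ) * N + 2052 * |t| / δ * N := by ring
    _ ≤ ε + 2052 * |t| / δ * N := by linarith
end

section
/- Let g be a Schwartz function on ℝ and let k ∈ ℤ with |k| ≤ 8. There is a constant C (depending on ‖ĝ‖_{L¹} and on ∫_{|ξ|≤ε}|ĝ| ≤ Cε, but independent of ε, x, t) such that for all ε > 0, x ∈ ℝ, t ∈ ℝ: |∫_ℝ e^{ixξ}(e^{it(ξ³+1/ξ)} − 1)ψ(ξ−k)ĝ(ξ)dξ| ≤ C(ε + |t|/ε). -/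
open MeasureTheory Complex Real

/-- The Fourier transform `ĝ(ξ) = (2π)^{−1/2} ∫ e^{−ixξ} g(x) dx`. -/
noncomputable def fourierTr (g : ℝ → ℂ) (ξ : ℝ) : ℂ :=
  ((2 * Real.pi : ℝ) ^ (-(1 : ℝ) / 2) : ℝ) *
    ∫ x : ℝ, Complex.exp (-(Complex.I * x * ξ)) * g x

lemma aux_norm_exp' (z : ℂ) (hz : z.re = 0) : ‖Complex.exp z‖ = 1 := by
  rw [Complex.norm_exp, hz, Real.exp_zero]

lemma aux_exp_sub_one (θ : ℝ) : ‖Complex.exp (Complex.I * θ) - 1‖ ≤ |θ| := by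
  have h1 : Complex.exp (Complex.I * θ) = (Real.cos θ : ℂ) + (Real.sin θ : ℂ) * Complex.I := by
    rw [mul_comm, Complex.exp_mul_I]
    push_cast
    ring_nf
  have h2 : ‖Complex.exp (Complex.I * θ) - 1‖^2 = (Real.cos θ - 1)^2 + Real.sin θ^2 := by
    rw [h1, Complex.sq_norm, Complex.normSq_apply]
    simp [Complex.cos_ofReal_re, Complex.sin_ofReal_re]
    ring
  have h3 : Real.sin (θ/2)^2 = 1/2 - Real.cos θ / 2 := by
    have := Real.sin_sq_eq_half_sub (θ/2)
    rw [show 2 * (θ/2) = θ by ring] at this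
    exact this
  have h4 : |Real.sin (θ/2)| ≤ |θ/2| := Real.abs_sin_le_abs
  have h5 : Real.sin (θ/2)^2 ≤ (θ/2)^2 := by
    have := mul_self_le_mul_self (abs_nonneg _) h4
    simpa [← sq, _root_.sq_abs] using this
  nlinarith [Real.sin_sq_add_cos_sq θ, norm_nonneg (Complex.exp (Complex.I * θ) - 1),
    abs_nonneg θ, _root_.sq_abs θ,
    sq_nonneg (‖Complex.exp (Complex.I * θ) - 1‖ - |θ|),
    sq_nonneg (‖Complex.exp (Complex.I * θ) - 1‖ + |θ|)]

lemma aux_re2 (a b : ℝ) : (Complex.I * a * b).re = 0 := by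
  have h : Complex.I * a * b = Complex.I * ((a * b : ℝ) : ℂ) := by push_cast; ring
  rw [h]
  simp

lemma aux_re (r : ℝ) : (Complex.I * (r:ℂ)).re = 0 := by simp

lemma aux_ft_cont (g : SchwartzMap ℝ ℂ) :
    Continuous (fun ξ : ℝ => fourierTr (fun y => g y) ξ) := by
  have hgi : Integrable (fun y : ℝ => g y) := g.integrable
  unfold fourierTr
  apply Continuous.mul continuous_const
  apply continuous_of_dominated (bound := fun x => ‖g x‖)
  · intro ξ
    exact (Continuous.aestronglyMeasurable (by continuity))
  · intro ξ
    filter_upwards with x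
    rw [norm_mul, aux_norm_exp', one_mul]
    simp
  · exact hgi.norm
  · filter_upwards with x
    continuity

lemma aux_ft_bound (g : SchwartzMap ℝ ℂ) (ξ : ℝ) :
    ‖fourierTr (fun y => g y) ξ‖ ≤ ((2 * Real.pi : ℝ) ^ (-(1:ℝ)/2)) * ∫ x : ℝ, ‖g x‖ := by
  unfold fourierTr
  rw [norm_mul]
  have h1 : ‖∫ x : ℝ, Complex.exp (-(Complex.I * x * ξ)) * g x‖ ≤ ∫ x : ℝ, ‖g x‖ := by
    refine (norm_integral_le_integral_norm _).trans (le_of_eq ?_)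
    refine integral_congr_ae (Filter.Eventually.of_forall fun x => ?_)
    show ‖Complex.exp (-(Complex.I * x * ξ)) * g x‖ = ‖g x‖
    rw [norm_mul, aux_norm_exp', one_mul]
    simp
  apply mul_le_mul _ h1 (norm_nonneg _) (by positivity)
  rw [Complex.norm_real, Real.norm_eq_abs, _root_.abs_of_nonneg (by positivity)]

/-- Unit-scale low-frequency estimate (Lemma 2.5): for a Schwartz function `g`
and `k ∈ ℤ` with `|k| ≤ 8`, there is a constant `C` independent of `ε, x, t`
such that for all `ε > 0`, `x`, `t`,
`|∫ e^{ixξ}(e^{it(ξ³+1/ξ)} − 1)ψ(ξ−k)ĝ(ξ)dξ| ≤ C(ε + |t|/ε)`, where `ψ` is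
smooth, nonnegative and supported in `[−1,1]`. -/
theorem stmt14 (ψ : ℝ → ℝ) (hψ : ContDiff ℝ (⊤ : ℕ∞) ψ) (hψpos : ∀ ξ, 0 ≤ ψ ξ)
    (hψsupp : Function.support ψ ⊆ Set.Icc (-1) 1)
    (g : SchwartzMap ℝ ℂ) (k : ℤ) (hk : |k| ≤ 8) :
    ∃ C : ℝ, 0 < C ∧ ∀ ε : ℝ, 0 < ε → ∀ x t : ℝ,
      ‖∫ ξ : ℝ, Complex.exp (Complex.I * x * ξ) *
          (Complex.exp (Complex.I * t * (ξ ^ 3 + 1 / ξ)) - 1) *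
            (ψ (ξ - k) : ℂ) * fourierTr (fun y => g y) ξ‖ ≤
        C * (ε + |t| / ε) := by
  classical
  -- bound for ψ
  have hψc : Continuous ψ := hψ.continuous
  have hcs : HasCompactSupport ψ :=
    HasCompactSupport.intro isCompact_Icc fun ξ hξ => by
      by_contra h
      exact hξ (hψsupp h)
  obtain ⟨y0, hy0⟩ := hψc.exists_forall_ge_of_hasCompactSupport hcs
  set Bg : ℝ := ((2 * Real.pi : ℝ) ^ (-(1:ℝ)/2)) * ∫ x : ℝ, ‖g x‖ with hBg
  have hBg0 : 0 ≤ Bg := by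
    apply mul_nonneg (by positivity)
    exact integral_nonneg fun x => norm_nonneg _
  have hψ0 : 0 ≤ ψ y0 := hψpos y0
  set D : ℝ := ψ y0 * Bg with hD
  have hD0 : 0 ≤ D := mul_nonneg hψ0 hBg0
  refine ⟨13140 * D + 1, by positivity, ?_⟩
  intro ε hε x t
  set F : ℝ → ℂ := fun ξ => Complex.exp (Complex.I * x * ξ) *
      (Complex.exp (Complex.I * t * (ξ ^ 3 + 1 / ξ)) - 1) *
        (ψ (ξ - k) : ℂ) * fourierTr (fun y => g y) ξ with hF
  -- cast bounds on k
  have hk1 : (k : ℝ) ≤ 8 := by exact_mod_cast (abs_le.1 hk).2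
  have hk2 : (-8 : ℝ) ≤ (k : ℝ) := by exact_mod_cast (abs_le.1 hk).1
  -- rewriting the oscillatory exponent as I times a real number
  have hcastall : ∀ ξ : ℝ, Complex.I * t * ((ξ:ℂ) ^ 3 + 1 / (ξ:ℂ)) =
      Complex.I * ((t * (ξ ^ 3 + 1 / ξ) : ℝ) : ℂ) := by
    intro ξ
    push_cast
    ring
  -- pointwise norm identity
  have hnorm : ∀ ξ : ℝ, ‖F ξ‖ =
      ‖Complex.exp (Complex.I * t * (ξ ^ 3 + 1 / ξ)) - 1‖ * ψ (ξ - k) * ‖fourierTr (fun y => g y) ξ‖ := by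
    intro ξ
    simp only [hF]
    simp only [norm_mul]
    rw [aux_norm_exp' _ (aux_re2 x ξ), Complex.norm_real, Real.norm_eq_abs,
      _root_.abs_of_nonneg (hψpos _)]
    ring
  -- uniform bound
  have hψle : ∀ ξ : ℝ, ψ ξ ≤ ψ y0 := hy0
  have hftle : ∀ ξ : ℝ, ‖fourierTr (fun y => g y) ξ‖ ≤ Bg := fun ξ => aux_ft_bound g ξ
  have hexp2 : ∀ ξ : ℝ, ‖Complex.exp (Complex.I * t * (ξ ^ 3 + 1 / ξ)) - 1‖ ≤ 2 := by
    intro ξ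
    refine (norm_sub_le _ _).trans ?_
    rw [hcastall ξ, aux_norm_exp' _ (aux_re _), norm_one]
    norm_num
  have hFbound : ∀ ξ : ℝ, ‖F ξ‖ ≤ 2 * D := by
    intro ξ
    rw [hnorm ξ, hD]
    calc ‖Complex.exp (Complex.I * t * (ξ ^ 3 + 1 / ξ)) - 1‖ * ψ (ξ - k) * ‖fourierTr (fun y => g y) ξ‖
        ≤ 2 * ψ y0 * Bg := by
          apply mul_le_mul _ (hftle ξ) (norm_nonneg _) (by positivity)
          exact mul_le_mul (hexp2 ξ) (hψle _) (hψpos _) (by norm_num)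
      _ = 2 * (ψ y0 * Bg) := by ring
  -- vanishing outside [-9,9]
  have hFzero : ∀ ξ : ℝ, ξ ∉ Set.Icc (-9:ℝ) 9 → F ξ = 0 := by
    intro ξ hξ
    have hz : ψ (ξ - k) = 0 := by
      by_contra h
      have hmem := hψsupp h
      rw [Set.mem_Icc] at hmem
      exact hξ (Set.mem_Icc.2 ⟨by linarith [hmem.1], by linarith [hmem.2]⟩)
    simp only [hF]
    simp [hz]
  -- measurability
  have hmeas : AEStronglyMeasurable F volume := by
    have m1 : Measurable fun ξ : ℝ => Complex.exp (Complex.I * x * ξ) :=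
      (Complex.continuous_exp.comp (continuous_const.mul Complex.continuous_ofReal)).measurable
    have minner : Measurable fun ξ : ℝ => Complex.I * t * ((ξ:ℂ) ^ 3 + 1 / (ξ:ℂ)) := by
      have he : (fun ξ : ℝ => Complex.I * t * ((ξ:ℂ) ^ 3 + 1 / (ξ:ℂ)))
          = fun ξ : ℝ => Complex.I * ((t * (ξ ^ 3 + 1 / ξ) : ℝ) : ℂ) := funext hcastall
      rw [he]
      apply measurable_const.mul
      apply Complex.measurable_ofReal.comp
      apply measurable_const.mul
      exact ((measurable_id.pow_const 3).add (measurable_const.div measurable_id))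
    have m2 : Measurable fun ξ : ℝ =>
        Complex.exp (Complex.I * t * ((ξ:ℂ) ^ 3 + 1 / (ξ:ℂ))) - 1 :=
      (Complex.measurable_exp.comp minner).sub measurable_const
    have m3 : Measurable fun ξ : ℝ => ((ψ (ξ - k) : ℝ) : ℂ) :=
      (Complex.continuous_ofReal.comp (hψc.comp (continuous_id.sub continuous_const))).measurable
    exact (((m1.mul m2).mul m3).mul (aux_ft_cont g).measurable).aestronglyMeasurable
  -- integrability
  have hbint : Integrable ((Set.Icc (-9:ℝ) 9).indicator (fun _ => (2*D : ℝ))) := by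
    apply IntegrableOn.integrable_indicator _ measurableSet_Icc
    refine integrableOn_const ?_ ENNReal.coe_ne_top
    rw [Real.volume_Icc]
    exact ENNReal.ofReal_ne_top
  have hFint : Integrable F := by
    apply hbint.mono' hmeas
    filter_upwards with ξ
    show ‖F ξ‖ ≤ _
    by_cases hξ : ξ ∈ Set.Icc (-9:ℝ) 9
    · rw [Set.indicator_of_mem hξ]
      exact hFbound ξ
    · rw [Set.indicator_of_notMem hξ, hFzero ξ hξ, norm_zero]
  -- case split on ε
  rcases le_or_gt 1 ε with hε1 | hε1
  · -- trivial bound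
    have h1 : ‖∫ ξ : ℝ, F ξ‖ ≤ ∫ ξ : ℝ, (Set.Icc (-9:ℝ) 9).indicator (fun _ => (2*D : ℝ)) ξ := by
      refine (norm_integral_le_integral_norm _).trans ?_
      apply integral_mono hFint.norm hbint
      intro ξ
      show ‖F ξ‖ ≤ _
      by_cases hξ : ξ ∈ Set.Icc (-9:ℝ) 9
      · rw [Set.indicator_of_mem hξ]; exact hFbound ξ
      · rw [Set.indicator_of_notMem hξ, hFzero ξ hξ, norm_zero]
    have h2 : ∫ ξ : ℝ, (Set.Icc (-9:ℝ) 9).indicator (fun _ => (2*D : ℝ)) ξ = 36 * D := by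
      rw [integral_indicator_const _ measurableSet_Icc, measureReal_def, Real.volume_Icc,
        ENNReal.toReal_ofReal (by norm_num), smul_eq_mul]
      norm_num
      ring
    rw [h2] at h1
    have hts : 0 ≤ |t| / ε := by positivity
    calc ‖∫ ξ : ℝ, F ξ‖ ≤ 36 * D := h1
      _ ≤ (13140 * D + 1) * ε := by nlinarith
      _ ≤ (13140 * D + 1) * (ε + |t| / ε) := by nlinarith
  · -- real estimate: split at |ξ| = ε
    set s : Set ℝ := Set.Icc (-ε) ε with hsdef
    have hs : MeasurableSet s := measurableSet_Icc
    have hsplit : (∫ ξ in s, F ξ) + (∫ ξ in sᶜ, F ξ) = ∫ ξ : ℝ, F ξ :=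
      integral_add_compl hs hFint
    -- part 1
    have hp1 : ‖∫ ξ in s, F ξ‖ ≤ 2 * D * (2 * ε) := by
      have hμ : volume s < ⊤ := by
        rw [hsdef, Real.volume_Icc]; exact ENNReal.ofReal_lt_top
      have := norm_setIntegral_le_of_norm_le_const (μ := volume) (s := s) (f := F) hμ
        (fun ξ _ => hFbound ξ)
      refine this.trans (le_of_eq ?_)
      rw [hsdef, measureReal_def, Real.volume_Icc, ENNReal.toReal_ofReal (by linarith)]
      ring
    -- part 2
    set c2 : ℝ := 730 * D * |t| / ε with hc2
    have hc20 : 0 ≤ c2 := by positivity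
    have hp2bound : ∀ ξ ∈ sᶜ, ‖F ξ‖ ≤ (Set.Icc (-9:ℝ) 9).indicator (fun _ => c2) ξ := by
      intro ξ hξ
      by_cases hξ9 : ξ ∈ Set.Icc (-9:ℝ) 9
      · rw [Set.indicator_of_mem hξ9]
        have hξε : ε < |ξ| := by
          rw [hsdef] at hξ
          simp only [Set.mem_compl_iff, Set.mem_Icc, not_and_or, not_le] at hξ
          rcases hξ with h | h
          · rw [abs_of_nonpos (by linarith)]; linarith
          · rw [_root_.abs_of_nonneg (by linarith)]; linarith
        have hξ0 : (0:ℝ) < |ξ| := lt_trans hε hξε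
        have hξ9' : |ξ| ≤ 9 := by
          rw [Set.mem_Icc] at hξ9
          rw [abs_le]; exact ⟨hξ9.1, hξ9.2⟩
        -- bound the oscillation factor
        have hcast : Complex.I * t * ((ξ:ℂ) ^ 3 + 1 / (ξ:ℂ)) =
            Complex.I * ((t * (ξ ^ 3 + 1 / ξ) : ℝ) : ℂ) := by
          push_cast
          ring
        have hosc : ‖Complex.exp (Complex.I * t * ((ξ:ℂ) ^ 3 + 1 / (ξ:ℂ))) - 1‖ ≤
            |t * (ξ ^ 3 + 1 / ξ)| := by
          rw [hcast]
          exact aux_exp_sub_one _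
        have hφ : |ξ ^ 3 + 1 / ξ| ≤ 730 / ε := by
          have h1 : |ξ ^ 3 + 1 / ξ| ≤ |ξ| ^ 3 + 1 / |ξ| := by
            refine (abs_add_le _ _).trans ?_
            rw [_root_.abs_pow, _root_.abs_div, abs_one]
          have h2 : |ξ| ^ 3 ≤ 729 := by nlinarith [pow_le_pow_left₀ (abs_nonneg ξ) hξ9' 3]
          have h3 : 1 / |ξ| ≤ 1 / ε := by
            apply one_div_le_one_div_of_le hε (le_of_lt hξε)
          have h4 : (729 : ℝ) ≤ 729 / ε := by
            rw [le_div_iff₀ hε]; nlinarith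
          calc |ξ ^ 3 + 1 / ξ| ≤ 729 + 1 / ε := by linarith
            _ ≤ 729 / ε + 1 / ε := by linarith
            _ = 730 / ε := by rw [← add_div]; norm_num
        rw [hnorm ξ, hc2]
        have hoscfull : ‖Complex.exp (Complex.I * t * ((ξ:ℂ) ^ 3 + 1 / (ξ:ℂ))) - 1‖ ≤
            |t| * (730 / ε) := by
          refine hosc.trans ?_
          rw [abs_mul]
          exact mul_le_mul_of_nonneg_left hφ (abs_nonneg t)
        calc ‖Complex.exp (Complex.I * t * ((ξ:ℂ) ^ 3 + 1 / (ξ:ℂ))) - 1‖ * ψ (ξ - k) *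
              ‖fourierTr (fun y => g y) ξ‖
            ≤ (|t| * (730 / ε)) * ψ y0 * Bg := by
              apply mul_le_mul _ (hftle ξ) (norm_nonneg _) (by positivity)
              exact mul_le_mul hoscfull (hψle _) (hψpos _) (by positivity)
          _ = 730 * D * |t| / ε := by rw [hD]; field_simp
      · rw [Set.indicator_of_notMem hξ9, hFzero ξ hξ9]
        simp
    have hbint2 : Integrable ((Set.Icc (-9:ℝ) 9).indicator (fun _ => c2)) := by
      apply IntegrableOn.integrable_indicator _ measurableSet_Icc
      refine integrableOn_const ?_ ENNReal.coe_ne_top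
      rw [Real.volume_Icc]
      exact ENNReal.ofReal_ne_top
    have hp2 : ‖∫ ξ in sᶜ, F ξ‖ ≤ 18 * c2 := by
      refine (norm_integral_le_integral_norm _).trans ?_
      have ha : ∫ ξ in sᶜ, ‖F ξ‖ ≤ ∫ ξ in sᶜ, (Set.Icc (-9:ℝ) 9).indicator (fun _ => c2) ξ :=
        setIntegral_mono_on hFint.norm.integrableOn hbint2.integrableOn hs.compl hp2bound
      have hb : ∫ ξ in sᶜ, (Set.Icc (-9:ℝ) 9).indicator (fun _ => c2) ξ ≤
          ∫ ξ : ℝ, (Set.Icc (-9:ℝ) 9).indicator (fun _ => c2) ξ := by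
        apply setIntegral_le_integral hbint2
        filter_upwards with ξ
        exact Set.indicator_nonneg (fun _ _ => hc20) ξ
      have hc : ∫ ξ : ℝ, (Set.Icc (-9:ℝ) 9).indicator (fun _ => c2) ξ = 18 * c2 := by
        rw [integral_indicator_const _ measurableSet_Icc, measureReal_def, Real.volume_Icc,
          ENNReal.toReal_ofReal (by norm_num), smul_eq_mul]
        norm_num
      linarith
    -- combine
    have htotal : ‖∫ ξ : ℝ, F ξ‖ ≤ 2 * D * (2 * ε) + 18 * c2 := by
      rw [← hsplit]
      exact (norm_add_le _ _).trans (by linarith)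
    refine htotal.trans ?_
    have hts : 0 ≤ |t| / ε := by positivity
    have h1 : 2 * D * (2 * ε) ≤ (13140 * D + 1) * ε := by nlinarith
    have h2 : 18 * c2 ≤ (13140 * D + 1) * (|t| / ε) := by
      rw [hc2]
      have he : 18 * (730 * D * |t| / ε) = 13140 * D * (|t| / ε) := by ring
      rw [he]
      nlinarith
    rw [mul_add]
    linarith
end

section
/- Let g be a Schwartz function on ℝ and g^ω its Wiener randomization. Then for each fixed x, t and for all ε ∈ (0, 10^{−2}), p ≥ 2: ‖U(t)g^ω(x) − g^ω(x)‖_{L^p_ω(Ω)} ≤ C√p(ε + |t|/ε), with C independent of ε, x, t. Consequently, for every α > 0, ℙ({ω : |U(t)g^ω(x) − g^ω(x)| > α}) ≤ C₁ exp(−(α/(Ce(ε + |t|/ε)))²). -/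
open MeasureTheory Real

open scoped ENNReal NNReal

lemma aux_exp_norm (r : ℝ) : ‖Complex.exp (Complex.I * r)‖ = 1 := by
  rw [Complex.norm_exp]
  simp [Complex.mul_re]

lemma aux_exp_sub_one_le_two (r : ℝ) : ‖Complex.exp (Complex.I * r) - 1‖ ≤ 2 := by
  calc ‖Complex.exp (Complex.I * r) - 1‖ ≤ ‖Complex.exp (Complex.I * r)‖ + ‖(1:ℂ)‖ :=
        norm_sub_le _ _
    _ = 2 := by rw [aux_exp_norm]; simp; norm_num

lemma aux_exp_sub_one_le_abs (r : ℝ) : ‖Complex.exp (Complex.I * r) - 1‖ ≤ |r| := by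
  have hder : ∀ y : ℝ, HasDerivAt (fun s : ℝ => Complex.exp (Complex.I * s))
      (Complex.exp (Complex.I * y) * Complex.I) y := by
    intro y
    have h1 : HasDerivAt (fun s : ℝ => (Complex.I * s : ℂ)) Complex.I y := by
      simpa using (Complex.ofRealCLM.hasDerivAt (x := y)).const_mul Complex.I
    simpa using h1.cexp
  have := Convex.norm_image_sub_le_of_norm_hasDerivWithin_le
    (f := fun s : ℝ => Complex.exp (Complex.I * s))
    (f' := fun y => Complex.exp (Complex.I * y) * Complex.I) (C := 1) (s := Set.univ)
    (fun y _ => (hder y).hasDerivWithinAt)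
    (fun y _ => by rw [norm_mul, Complex.norm_I, mul_one, aux_exp_norm])
    convex_univ (Set.mem_univ 0) (Set.mem_univ r)
  simpa using this

lemma aux_psi_le_one (ψ : ℝ → ℝ) (hψpos : ∀ ξ, 0 ≤ ψ ξ)
    (hψsum : ∀ ξ : ℝ, (∑' k : ℤ, ψ (ξ - k)) = 1) (y : ℝ) : ψ y ≤ 1 := by
  have hs := hψsum y
  have hsumm : Summable (fun k : ℤ => ψ (y - k)) := by
    by_contra h
    rw [tsum_eq_zero_of_not_summable h] at hs
    norm_num at hs
  have h0 := hsumm.le_tsum 0 (fun j _ => hψpos _)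
  rw [hs] at h0
  simpa using h0

lemma aux_meas_tsum {Ω : Type*} [MeasurableSpace Ω] (f : ℤ → Ω → ℂ)
    (hf : ∀ k, Measurable (f k)) : Measurable fun ω => ∑' k, f k ω := by
  have hmeasg : Measurable (fun ω => ∑' k, (‖f k ω‖₊ : ℝ≥0∞)) :=
    Measurable.ennreal_tsum fun k => (hf k).nnnorm.coe_nnreal_ennreal
  have hSeq : {ω | Summable fun k => f k ω}
      = {ω | ¬ (∑' k, (‖f k ω‖₊ : ℝ≥0∞)) = ∞} := by
    ext ω
    simp only [Set.mem_setOf_eq, ← Ne.eq_def, ENNReal.tsum_coe_ne_top_iff_summable]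
    constructor
    · intro h
      exact NNReal.summable_coe.mp (by simpa [coe_nnnorm] using summable_norm_iff.mpr h)
    · intro h
      exact summable_norm_iff.mp (by simpa [coe_nnnorm] using NNReal.summable_coe.mpr h)
  have hS : MeasurableSet {ω | Summable fun k => f k ω} := by
    rw [hSeq]
    exact (hmeasg (measurableSet_singleton ∞)).compl
  set S := {ω | Summable fun k => f k ω}
  set e : ℕ → Finset ℤ := fun n => Finset.Icc (-(n : ℤ)) n with he_def
  have hmono : Monotone e := fun m n hmn =>
    Finset.Icc_subset_Icc (by exact_mod_cast neg_le_neg (Int.ofNat_le.mpr hmn))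
      (by exact_mod_cast hmn)
  have hexh : ∀ k : ℤ, ∃ n : ℕ, k ∈ e n := by
    intro k
    exact ⟨k.natAbs, by simp [he_def, Finset.mem_Icc]; exact ⟨neg_abs_le k, le_abs_self k⟩⟩
  have he : Filter.Tendsto e Filter.atTop Filter.atTop :=
    Filter.tendsto_atTop_finset_of_monotone hmono hexh
  refine measurable_of_tendsto_metrizable
    (f := fun n ω => S.indicator (fun ω => ∑ k ∈ e n, f k ω) ω)
    (fun n => Measurable.indicator (Finset.measurable_sum _ (fun k _ => hf k)) hS) ?_
  rw [tendsto_pi_nhds]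
  intro ω
  by_cases hω : Summable fun k => f k ω
  · have hmem : ω ∈ S := hω
    simp only [Set.indicator_of_mem hmem]
    exact hω.hasSum.comp he
  · have hmem : ω ∉ S := fun h => hω h
    simp only [Set.indicator_of_notMem hmem, tsum_eq_zero_of_not_summable hω]
    exact tendsto_const_nhds

lemma aux_decay (g : SchwartzMap ℝ ℂ) :
    ∃ K : ℝ, 0 < K ∧ ∀ ξ : ℝ, ‖fourierTr (fun y => g y) ξ‖ ≤ K / (1 + ξ ^ 6) := by
  set G : SchwartzMap ℝ ℂ := SchwartzMap.fourierTransformCLM ℂ g with hG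
  obtain ⟨C6, hC6pos, hC6⟩ := G.decay 6 0
  obtain ⟨C0', hC0'pos, hC0'⟩ := G.decay 0 0
  have hGb : ∀ η : ℝ, ‖G η‖ ≤ (C0' + C6) / (1 + η ^ 6) := by
    intro η
    have h6 := hC6 η
    have h0 := hC0' η
    rw [norm_iteratedFDeriv_zero] at h6 h0
    rw [Real.norm_eq_abs] at h6
    have habs : |η| ^ 6 = η ^ 6 := by
      rw [← abs_pow, abs_of_nonneg (by positivity)]
    rw [habs] at h6
    simp only [pow_zero, one_mul, Real.norm_eq_abs] at h0
    rw [le_div_iff₀ (by positivity)]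
    nlinarith [norm_nonneg (G η)]
  have hπ : (0:ℝ) < 2 * Real.pi := by positivity
  have hkey : ∀ ξ : ℝ, fourierTr (fun y => g y) ξ
      = (((2 * Real.pi : ℝ) ^ (-(1 : ℝ) / 2) : ℝ) : ℂ) * G (ξ / (2 * Real.pi)) := by
    intro ξ
    have hGval : G (ξ / (2 * Real.pi)) = FourierTransform.fourier (fun y => g y) (ξ / (2 * Real.pi)) := by
      rw [hG]
      simp [SchwartzMap.fourierTransformCLM_apply, SchwartzMap.fourier_coe]
    rw [hGval, Real.fourier_real_eq_integral_exp_smul, fourierTr]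
    congr 1
    apply integral_congr_ae
    filter_upwards with v
    rw [smul_eq_mul]
    congr 1
    congr 1
    have harg : (-2 * Real.pi * v * (ξ / (2 * Real.pi)) : ℝ) = -(v * ξ) := by
      field_simp
    rw [harg]
    push_cast
    ring
  have hc₀1 : ((2 * Real.pi : ℝ) ^ (-(1 : ℝ) / 2) : ℝ) ≤ 1 :=
    Real.rpow_le_one_of_one_le_of_nonpos (by nlinarith [Real.pi_gt_three]) (by norm_num)
  have hc₀0 : (0:ℝ) ≤ ((2 * Real.pi : ℝ) ^ (-(1 : ℝ) / 2) : ℝ) :=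
    Real.rpow_nonneg (by positivity) _
  refine ⟨(C0' + C6) * (2 * Real.pi) ^ 6, by positivity, fun ξ => ?_⟩
  rw [hkey ξ, norm_mul, Complex.norm_real, Real.norm_eq_abs, abs_of_nonneg hc₀0]
  calc ((2 * Real.pi : ℝ) ^ (-(1 : ℝ) / 2)) * ‖G (ξ / (2 * Real.pi))‖
      ≤ 1 * ((C0' + C6) / (1 + (ξ / (2 * Real.pi)) ^ 6)) := by
        apply mul_le_mul hc₀1 (hGb _) (norm_nonneg _) zero_le_one
    _ ≤ (C0' + C6) * (2 * Real.pi) ^ 6 / (1 + ξ ^ 6) := by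
        rw [one_mul, div_le_div_iff₀ (by positivity) (by positivity)]
        have hpow : (ξ / (2 * Real.pi)) ^ 6 = ξ ^ 6 / (2 * Real.pi) ^ 6 := by
          rw [div_pow]
        have h2π : (1:ℝ) ≤ (2 * Real.pi) ^ 6 := one_le_pow₀ (by nlinarith [Real.pi_gt_three])
        rw [hpow]
        have hξ6 : (0:ℝ) ≤ ξ ^ 6 := by positivity
        have : (2 * Real.pi) ^ 6 * (1 + ξ ^ 6 / (2 * Real.pi) ^ 6) = (2 * Real.pi) ^ 6 + ξ ^ 6 := by
          field_simp
        nlinarith [hC0'pos, hC6pos]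

lemma aux_summable_r : Summable (fun k : ℤ => ((1:ℝ) + (k:ℝ) ^ 2)⁻¹) := by
  have hnat : Summable (fun n : ℕ => ((1:ℝ) + (n:ℝ) ^ 2)⁻¹) := by
    have h1 : Summable (fun n : ℕ => (1:ℝ) / (n:ℝ) ^ 2) :=
      summable_one_div_nat_pow.mpr (by norm_num)
    have h2 : Summable (fun n : ℕ => (1:ℝ) / ((n:ℝ) + 1) ^ 2) := by
      have := (summable_nat_add_iff 1).mpr h1
      simpa using this
    refine Summable.of_nonneg_of_le (fun n => by positivity) (fun n => ?_) (h2.mul_left 2)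
    have hn : (0:ℝ) ≤ (n:ℝ) := Nat.cast_nonneg n
    rw [inv_eq_one_div, div_le_iff₀ (by positivity)]
    have : 2 * (1 / ((n:ℝ) + 1) ^ 2) * (1 + (n:ℝ) ^ 2)
        = 2 * (1 + (n:ℝ) ^ 2) / ((n:ℝ) + 1) ^ 2 := by ring
    rw [this, le_div_iff₀ (by positivity)]
    nlinarith [sq_nonneg ((n:ℝ) - 1)]
  apply Summable.of_nat_of_neg <;> · simpa using hnat


set_option maxHeartbeats 2000000 in
/-- Gaussian moment and tail bounds for `U(t)g^ω − g^ω` when `g` is Schwartz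
(Lemma 3.2): for each fixed `x, t` and all `ε ∈ (0, 10⁻²)`, `p ≥ 2`,
`‖U(t)g^ω(x) − g^ω(x)‖_{L^p_ω} ≤ C√p(ε + |t|/ε)` with `C` independent of
`ε, x, t`, and consequently for every `α > 0`,
`ℙ(|U(t)g^ω(x) − g^ω(x)| > α) ≤ C₁ exp(−(α/(Ce(ε + |t|/ε)))²)`.  Here
`U(t)g^ω(x) − g^ω(x) = Σ_k g_k(ω)·(2π)^{−1/2}∫e^{ixξ}(e^{it(ξ³+1/ξ)}−1)ψ(ξ−k)ĝ(ξ)dξ`. -/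
theorem stmt18 (Ω : Type*) [MeasureSpace Ω]
    [IsProbabilityMeasure (volume : Measure Ω)]
    (gk : ℤ → Ω → ℂ) (hmeas : ∀ k, Measurable (gk k))
    (C0 : ℝ) (hC0 : 0 < C0)
    (hKhinchin : ∀ p : ℝ, 2 ≤ p → ∀ a : ℤ → ℂ, Summable (fun k => ‖a k‖ ^ 2) →
      eLpNorm (fun ω => ∑' k : ℤ, gk k ω * a k) (ENNReal.ofReal p) volume ≤
        ENNReal.ofReal (C0 * Real.sqrt p * (∑' k : ℤ, ‖a k‖ ^ 2) ^ ((1 : ℝ) / 2)))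
    (ψ : ℝ → ℝ) (hψ : ContDiff ℝ (⊤ : ℕ∞) ψ) (hψpos : ∀ ξ, 0 ≤ ψ ξ)
    (hψsupp : Function.support ψ ⊆ Set.Icc (-1) 1)
    (hψsum : ∀ ξ : ℝ, (∑' k : ℤ, ψ (ξ - k)) = 1)
    (g : SchwartzMap ℝ ℂ) :
    ∃ C C₁ : ℝ, 0 < C ∧ 0 < C₁ ∧ ∀ x t ε : ℝ, 0 < ε → ε < 1 / 100 →
      (∀ p : ℝ, 2 ≤ p →
        eLpNorm (fun ω => ∑' k : ℤ, gk k ω *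
            (((2 * Real.pi : ℝ) ^ (-(1 : ℝ) / 2) : ℝ) *
              ∫ ξ : ℝ, Complex.exp (Complex.I * x * ξ) *
                (Complex.exp (Complex.I * t * (ξ ^ 3 + 1 / ξ)) - 1) *
                  (ψ (ξ - k) : ℂ) * fourierTr (fun y => g y) ξ))
          (ENNReal.ofReal p) volume ≤
          ENNReal.ofReal (C * Real.sqrt p * (ε + |t| / ε))) ∧
      ∀ α : ℝ, 0 < α →
        (volume {ω : Ω | α < ‖∑' k : ℤ, gk k ω *
            (((2 * Real.pi : ℝ) ^ (-(1 : ℝ) / 2) : ℝ) *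
              ∫ ξ : ℝ, Complex.exp (Complex.I * x * ξ) *
                (Complex.exp (Complex.I * t * (ξ ^ 3 + 1 / ξ)) - 1) *
                  (ψ (ξ - k) : ℂ) * fourierTr (fun y => g y) ξ)‖}).toReal ≤
          C₁ * Real.exp (-(α / (C * Real.exp 1 * (ε + |t| / ε))) ^ 2) := by
  obtain ⟨K, hK, hdecay⟩ := aux_decay g
  set E : ℤ → ℝ := fun k => 48 * K / (1 + (k : ℝ) ^ 2) + (if |k| ≤ 2 then 4 * K else 0)
    with hE_def
  have hEnonneg : ∀ k, 0 ≤ E k := by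
    intro k
    apply add_nonneg (by positivity)
    split <;> positivity
  have hE2 : Summable (fun k : ℤ => E k ^ 2) := by
    refine Summable.of_nonneg_of_le (fun k => sq_nonneg _) (fun k => ?_)
      (aux_summable_r.mul_left ((68 * K) ^ 2))
    have hrle : ((1 : ℝ) + (k : ℝ) ^ 2)⁻¹ ≤ 1 := by
      rw [inv_le_one_iff₀]; right; nlinarith [sq_nonneg ((k : ℝ))]
    have hrpos : (0:ℝ) < ((1 : ℝ) + (k : ℝ) ^ 2)⁻¹ := by positivity
    have hEle : E k ≤ 68 * K * ((1 + (k : ℝ) ^ 2)⁻¹) := by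
      simp only [hE_def]
      have h1 : 48 * K / (1 + (k : ℝ) ^ 2) = 48 * K * ((1 + (k : ℝ) ^ 2)⁻¹) := by
        rw [div_eq_mul_inv]
      rw [h1]
      have h2 : (if |k| ≤ 2 then 4 * K else 0) ≤ 20 * K * ((1 + (k : ℝ) ^ 2)⁻¹) := by
        split_ifs with hk
        · have hc1 : ((k : ℝ)) ≤ 2 := by exact_mod_cast le_trans (le_abs_self k) hk
          have hc2 : (-2 : ℝ) ≤ (k : ℝ) := by
            exact_mod_cast le_trans (neg_le_neg hk) (neg_abs_le k)
          have h3 : ((k : ℝ)) ^ 2 ≤ 4 := by nlinarith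
          have h4 : 20 * K * ((1 + (k : ℝ) ^ 2)⁻¹) = 20 * K / (1 + (k : ℝ) ^ 2) :=
            (div_eq_mul_inv _ _).symm
          rw [h4, le_div_iff₀ (by positivity)]
          nlinarith
        · positivity
      linarith
    calc E k ^ 2 ≤ (68 * K * ((1 + (k : ℝ) ^ 2)⁻¹)) ^ 2 :=
          pow_le_pow_left₀ (hEnonneg k) hEle 2
      _ = (68 * K) ^ 2 * (((1 + (k : ℝ) ^ 2)⁻¹) * ((1 + (k : ℝ) ^ 2)⁻¹)) := by ring
      _ ≤ (68 * K) ^ 2 * ((1 + (k : ℝ) ^ 2)⁻¹) := by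
        nlinarith [mul_le_mul_of_nonneg_left hrle (mul_nonneg (sq_nonneg (68 * K)) hrpos.le)]
  set Ssq : ℝ := ∑' k : ℤ, E k ^ 2 with hSsq_def
  have hSsq0 : 0 ≤ Ssq := tsum_nonneg fun k => sq_nonneg _
  set C : ℝ := C0 * Real.sqrt Ssq + 1 with hC_def
  have hC1 : 1 ≤ C := le_add_of_nonneg_left (by positivity)
  have hCpos : 0 < C := lt_of_lt_of_le one_pos hC1
  refine ⟨C, Real.exp 2, hCpos, Real.exp_pos 2, fun x t ε hε hε' => ?_⟩
  set Λ : ℝ := ε + |t| / ε with hΛ_def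
  have hΛε : ε ≤ Λ := le_add_of_nonneg_right (by positivity)
  have hΛpos : 0 < Λ := lt_of_lt_of_le hε hΛε
  have htε : |t| ≤ |t| / ε := by
    rw [le_div_iff₀ hε]
    nlinarith [abs_nonneg t, hε'.le]
  have htΛ : |t| / ε ≤ Λ := le_add_of_nonneg_left hε.le
  have hc₀0 : (0:ℝ) ≤ ((2 * Real.pi : ℝ) ^ (-(1 : ℝ) / 2) : ℝ) :=
    Real.rpow_nonneg (by positivity) _
  have hc₀1 : ((2 * Real.pi : ℝ) ^ (-(1 : ℝ) / 2) : ℝ) ≤ 1 :=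
    Real.rpow_le_one_of_one_le_of_nonpos (by nlinarith [Real.pi_gt_three]) (by norm_num)
  have hcore : ∀ k : ℤ, ‖(((2 * Real.pi : ℝ) ^ (-(1 : ℝ) / 2) : ℝ) : ℂ) *
      ∫ ξ : ℝ, Complex.exp (Complex.I * x * ξ) * (Complex.exp (Complex.I * t * (ξ ^ 3 + 1 / ξ)) - 1) * (ψ (ξ - k) : ℂ) * fourierTr (fun y => g y) ξ‖ ≤ Λ * E k := by
    intro k
    set s1 : Set ℝ := Set.Icc ((k : ℝ) - 1) ((k : ℝ) + 1) with hs1_def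
    set D : ℝ := (|t| + |t| / ε) * (12 * K / (1 + (k : ℝ) ^ 2)) with hD_def
    have hD0 : 0 ≤ D := by positivity
    set χ : ℝ → ℝ := fun ξ => Set.indicator (Set.Icc (-ε) ε) (fun _ => 2 * K) ξ with hχ_def
    have hχint : Integrable χ := by
      rw [hχ_def]
      exact (integrable_indicator_iff measurableSet_Icc).mpr
        (integrableOn_const measure_Icc_lt_top.ne)
    have hχ0 : ∀ ξ, 0 ≤ χ ξ := by
      intro ξ
      simp only [hχ_def]
      exact Set.indicator_nonneg (fun _ _ => by positivity) ξ
    set w : ℝ → ℝ := fun ξ => D + χ ξ with hw_def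
    have hwint : IntegrableOn w s1 := by
      apply Integrable.add
      · exact integrableOn_const measure_Icc_lt_top.ne
      · exact hχint.integrableOn
    have hnint : Integrable (s1.indicator w) :=
      (integrable_indicator_iff measurableSet_Icc).mpr hwint
    have hF : ∀ ξ : ℝ, ‖Complex.exp (Complex.I * x * ξ) * (Complex.exp (Complex.I * t * (ξ ^ 3 + 1 / ξ)) - 1) * (ψ (ξ - k) : ℂ) * fourierTr (fun y => g y) ξ‖ ≤ s1.indicator w ξ := by
      intro ξ
      by_cases hmem : ξ ∈ s1
      · rw [Set.indicator_of_mem hmem]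
        obtain ⟨hm1, hm2⟩ := Set.mem_Icc.mp hmem
        have hphase : Complex.I * (t : ℂ) * ((ξ : ℂ) ^ 3 + 1 / (ξ : ℂ))
            = Complex.I * ((t * (ξ ^ 3 + 1 / ξ) : ℝ) : ℂ) := by push_cast; ring
        have hxphase : Complex.I * (x : ℂ) * (ξ : ℂ) = Complex.I * ((x * ξ : ℝ) : ℂ) := by
          push_cast; ring
        rw [hphase, hxphase, norm_mul, norm_mul, norm_mul, aux_exp_norm, one_mul,
          Complex.norm_real, Real.norm_eq_abs, abs_of_nonneg (hψpos _)]
        set b : ℝ := if |ξ| ≤ ε then 2 else |t| * |ξ| ^ 3 + |t| / ε with hb_def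
        have hb0 : 0 ≤ b := by
          simp only [hb_def]; split <;> positivity
        have hbexp : ‖Complex.exp (Complex.I * ((t * (ξ ^ 3 + 1 / ξ) : ℝ) : ℂ)) - 1‖ ≤ b := by
          simp only [hb_def]
          split_ifs with hcase
          · exact aux_exp_sub_one_le_two _
          · refine (aux_exp_sub_one_le_abs _).trans ?_
            push_neg at hcase
            have h1 : |t * (ξ ^ 3 + 1 / ξ)| ≤ |t| * (|ξ| ^ 3 + 1 / |ξ|) := by
              rw [abs_mul]
              refine mul_le_mul_of_nonneg_left ?_ (abs_nonneg t)
              calc |ξ ^ 3 + 1 / ξ| ≤ |ξ ^ 3| + |1 / ξ| := abs_add_le _ _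
                _ = |ξ| ^ 3 + 1 / |ξ| := by rw [abs_pow, abs_div, abs_one]
            have h2 : 1 / |ξ| ≤ 1 / ε := one_div_le_one_div_of_le hε hcase.le
            calc |t * (ξ ^ 3 + 1 / ξ)| ≤ |t| * (|ξ| ^ 3 + 1 / |ξ|) := h1
              _ ≤ |t| * (|ξ| ^ 3 + 1 / ε) :=
                  mul_le_mul_of_nonneg_left (by linarith) (abs_nonneg t)
              _ = |t| * |ξ| ^ 3 + |t| / ε := by ring
        have hg6 := hdecay ξ
        have hξ6 : |ξ| ^ 6 = ξ ^ 6 := by rw [← abs_pow, abs_of_nonneg (by positivity)]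
        have hξ2 : |ξ| ^ 2 = ξ ^ 2 := sq_abs ξ
        have hdenom : (0:ℝ) < 1 + ξ ^ 6 := by positivity
        have hfinal : b * (K / (1 + ξ ^ 6)) ≤ w ξ := by
          simp only [hw_def, hb_def]
          split_ifs with hcase
          · have hχξ : χ ξ = 2 * K := by
              simp only [hχ_def]
              exact Set.indicator_of_mem (Set.mem_Icc.mpr (abs_le.mp hcase)) _
            have hKle : K / (1 + ξ ^ 6) ≤ K := by
              apply div_le_self hK.le
              nlinarith [pow_nonneg (sq_nonneg ξ) 3]
            rw [hχξ]
            linarith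
          · have hdist : ((ξ : ℝ) - (k : ℝ)) ^ 2 ≤ 1 := by nlinarith
            have hk3 : (1:ℝ) + (k : ℝ) ^ 2 ≤ 3 * (1 + ξ ^ 2) := by
              nlinarith [sq_nonneg ((ξ : ℝ) + (k : ℝ))]
            have habs0 : (0:ℝ) ≤ |ξ| := abs_nonneg ξ
            have key1 : |ξ| ^ 3 * (1 + (k : ℝ) ^ 2) ≤ 12 * (1 + ξ ^ 6) := by
              nlinarith [mul_le_mul_of_nonneg_left hk3 (pow_nonneg habs0 3),
                sq_nonneg (|ξ| ^ 3 - 1), sq_nonneg (|ξ| ^ 3 - |ξ| ^ 2),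
                sq_nonneg (|ξ| ^ 3 - |ξ|), sq_nonneg (|ξ| ^ 2 - 1), hξ6, hξ2,
                pow_nonneg habs0 2, pow_nonneg habs0 3]
            have key2 : (1:ℝ) + (k : ℝ) ^ 2 ≤ 12 * (1 + ξ ^ 6) := by
              nlinarith [hk3, sq_nonneg (|ξ| ^ 3 - |ξ|), sq_nonneg (|ξ| ^ 2 - 1), hξ6, hξ2]
            have hkpos : (0:ℝ) < 1 + (k : ℝ) ^ 2 := by positivity
            have hA1 : |t| * |ξ| ^ 3 * (K / (1 + ξ ^ 6)) ≤ |t| * (12 * K / (1 + (k : ℝ) ^ 2)) := by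
              rw [mul_assoc]
              refine mul_le_mul_of_nonneg_left ?_ (abs_nonneg t)
              rw [← mul_div_assoc, div_le_div_iff₀ hdenom hkpos]
              nlinarith [mul_le_mul_of_nonneg_left key1 hK.le]
            have hA2 : |t| / ε * (K / (1 + ξ ^ 6)) ≤ |t| / ε * (12 * K / (1 + (k : ℝ) ^ 2)) := by
              refine mul_le_mul_of_nonneg_left ?_ (by positivity)
              rw [div_le_div_iff₀ hdenom hkpos]
              nlinarith [mul_le_mul_of_nonneg_left key2 hK.le]
            have hχ0' := hχ0 ξ
            calc (|t| * |ξ| ^ 3 + |t| / ε) * (K / (1 + ξ ^ 6))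
                = |t| * |ξ| ^ 3 * (K / (1 + ξ ^ 6)) + |t| / ε * (K / (1 + ξ ^ 6)) := by ring
              _ ≤ |t| * (12 * K / (1 + (k : ℝ) ^ 2)) + |t| / ε * (12 * K / (1 + (k : ℝ) ^ 2)) :=
                  add_le_add hA1 hA2
              _ = D := by rw [hD_def]; ring
              _ ≤ D + χ ξ := le_add_of_nonneg_right (hχ0 ξ)
        calc ‖Complex.exp (Complex.I * ((t * (ξ ^ 3 + 1 / ξ) : ℝ) : ℂ)) - 1‖ * ψ (ξ - k) *
              ‖fourierTr (fun y => g y) ξ‖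
            ≤ b * 1 * (K / (1 + ξ ^ 6)) := by
              refine mul_le_mul (mul_le_mul hbexp
                (aux_psi_le_one ψ hψpos hψsum _) (hψpos _) hb0) hg6 (norm_nonneg _)
                (mul_nonneg hb0 zero_le_one)
          _ = b * (K / (1 + ξ ^ 6)) := by ring
          _ ≤ w ξ := hfinal
      · have hψ0 : ψ (ξ - k) = 0 := by
          by_contra hne
          have hsupp := hψsupp (Function.mem_support.mpr hne)
          rw [Set.mem_Icc] at hsupp
          refine hmem ?_
          rw [hs1_def, Set.mem_Icc]
          constructor <;> linarith [hsupp.1, hsupp.2]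
        rw [Set.indicator_of_notMem hmem]
        simp [hψ0]
    have hwd : ∫ ξ : ℝ, s1.indicator w ξ = 2 * D + ∫ ξ in s1, χ ξ := by
      rw [integral_indicator measurableSet_Icc]
      simp only [hw_def]
      rw [integral_add (integrableOn_const (C := D) measure_Icc_lt_top.ne) hχint.integrableOn]
      congr 1
      rw [setIntegral_const, Real.volume_real_Icc]
      have h2 : ((k : ℝ) + 1 - ((k : ℝ) - 1)) = 2 := by ring
      rw [h2, max_eq_left (by norm_num)]
      simp [smul_eq_mul]
    have hχbound : (∫ ξ in s1, χ ξ) ≤ (if |k| ≤ 2 then 4 * K * ε else 0) := by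
      split_ifs with hk
      · calc (∫ ξ in s1, χ ξ) ≤ ∫ ξ : ℝ, χ ξ :=
              setIntegral_le_integral hχint (Filter.Eventually.of_forall hχ0)
          _ = 4 * K * ε := by
            simp only [hχ_def]
            rw [integral_indicator measurableSet_Icc, setIntegral_const, Real.volume_real_Icc]
            have h2 : (ε - -ε) = 2 * ε := by ring
            rw [h2, max_eq_left (by positivity)]
            simp [smul_eq_mul]; ring
      · have hzero : Set.EqOn χ 0 s1 := by
          intro ξ hξ
          obtain ⟨hl, hr⟩ := Set.mem_Icc.mp hξ
          simp only [hχ_def, Pi.zero_apply]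
          apply Set.indicator_of_notMem
          rw [Set.mem_Icc]
          push_neg at hk
          have hk3 : (3:ℝ) ≤ |(k : ℝ)| := by
            rw [← Int.cast_abs]
            exact_mod_cast hk
          rintro ⟨hc1, hc2⟩
          rcases abs_cases ((k : ℝ)) with ⟨heq, _⟩ | ⟨heq, _⟩
          · rw [heq] at hk3; linarith
          · rw [heq] at hk3; linarith
        rw [setIntegral_congr_fun measurableSet_Icc hzero]
        simp
    calc ‖(((2 * Real.pi : ℝ) ^ (-(1 : ℝ) / 2) : ℝ) : ℂ) * ∫ ξ : ℝ, Complex.exp (Complex.I * x * ξ) * (Complex.exp (Complex.I * t * (ξ ^ 3 + 1 / ξ)) - 1) * (ψ (ξ - k) : ℂ) * fourierTr (fun y => g y) ξ‖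
        = ((2 * Real.pi : ℝ) ^ (-(1 : ℝ) / 2) : ℝ) * ‖∫ ξ : ℝ, Complex.exp (Complex.I * x * ξ) * (Complex.exp (Complex.I * t * (ξ ^ 3 + 1 / ξ)) - 1) * (ψ (ξ - k) : ℂ) * fourierTr (fun y => g y) ξ‖ := by
          rw [norm_mul, Complex.norm_real, Real.norm_eq_abs, abs_of_nonneg hc₀0]
      _ ≤ 1 * (2 * D + (if |k| ≤ 2 then 4 * K * ε else 0)) := by
          refine mul_le_mul hc₀1 ?_ (norm_nonneg _) zero_le_one
          refine (norm_integral_le_of_norm_le hnint (Filter.Eventually.of_forall hF)).trans ?_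
          rw [hwd]
          linarith
      _ ≤ Λ * E k := by
          rw [one_mul]
          have h2D : 2 * D ≤ Λ * (48 * K / (1 + (k : ℝ) ^ 2)) := by
            rw [hD_def]
            have h1 : |t| + |t| / ε ≤ 2 * Λ := by linarith
            have h2 : (0:ℝ) ≤ 12 * K / (1 + (k : ℝ) ^ 2) := by positivity
            have h4 := mul_le_mul_of_nonneg_right h1 h2
            have h5 : Λ * (48 * K / (1 + (k : ℝ) ^ 2))
                = 2 * (2 * Λ * (12 * K / (1 + (k : ℝ) ^ 2))) := by ring
            rw [h5]
            linarith [h4]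
          have hIf : (if |k| ≤ 2 then 4 * K * ε else 0) ≤ Λ * (if |k| ≤ 2 then 4 * K else 0) := by
            split_ifs
            · nlinarith
            · simp
          calc 2 * D + (if |k| ≤ 2 then 4 * K * ε else 0)
              ≤ Λ * (48 * K / (1 + (k : ℝ) ^ 2)) + Λ * (if |k| ≤ 2 then 4 * K else 0) :=
                add_le_add h2D hIf
            _ = Λ * E k := by simp only [hE_def]; ring
  have key : ∀ A : ℤ → ℂ, (∀ k, ‖A k‖ ≤ Λ * E k) →
      (∀ p : ℝ, 2 ≤ p →
        eLpNorm (fun ω => ∑' k : ℤ, gk k ω * A k) (ENNReal.ofReal p) volume ≤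
          ENNReal.ofReal (C * Real.sqrt p * Λ)) ∧
      (∀ α : ℝ, 0 < α →
        (volume {ω : Ω | α < ‖∑' k : ℤ, gk k ω * A k‖}).toReal ≤
          Real.exp 2 * Real.exp (-(α / (C * Real.exp 1 * Λ)) ^ 2)) := by
    intro A hA
    have hA2sum : Summable (fun k : ℤ => ‖A k‖ ^ 2) := by
      refine Summable.of_nonneg_of_le (fun k => sq_nonneg _) (fun k => ?_)
        (hE2.mul_left (Λ ^ 2))
      calc ‖A k‖ ^ 2 ≤ (Λ * E k) ^ 2 := pow_le_pow_left₀ (norm_nonneg _) (hA k) 2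
        _ = Λ ^ 2 * E k ^ 2 := mul_pow _ _ 2
    have htsum_le : (∑' k : ℤ, ‖A k‖ ^ 2) ≤ Λ ^ 2 * Ssq := by
      have h1 : (∑' k : ℤ, ‖A k‖ ^ 2) ≤ ∑' k : ℤ, Λ ^ 2 * E k ^ 2 := by
        refine Summable.tsum_le_tsum (fun k => ?_) hA2sum (hE2.mul_left (Λ ^ 2))
        calc ‖A k‖ ^ 2 ≤ (Λ * E k) ^ 2 := pow_le_pow_left₀ (norm_nonneg _) (hA k) 2
          _ = Λ ^ 2 * E k ^ 2 := mul_pow _ _ 2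
      calc (∑' k : ℤ, ‖A k‖ ^ 2) ≤ ∑' k : ℤ, Λ ^ 2 * E k ^ 2 := h1
        _ = Λ ^ 2 * Ssq := by rw [tsum_mul_left]
    have hmom : ∀ p : ℝ, 2 ≤ p →
        eLpNorm (fun ω => ∑' k : ℤ, gk k ω * A k) (ENNReal.ofReal p) volume ≤
          ENNReal.ofReal (C * Real.sqrt p * Λ) := by
      intro p hp
      refine (hKhinchin p hp A hA2sum).trans (ENNReal.ofReal_le_ofReal ?_)
      have hrp : (∑' k : ℤ, ‖A k‖ ^ 2) ^ ((1:ℝ) / 2) ≤ Λ * Real.sqrt Ssq := by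
        rw [← Real.sqrt_eq_rpow]
        calc Real.sqrt (∑' k : ℤ, ‖A k‖ ^ 2) ≤ Real.sqrt (Λ ^ 2 * Ssq) :=
              Real.sqrt_le_sqrt htsum_le
          _ = Λ * Real.sqrt Ssq := by
              rw [Real.sqrt_mul (sq_nonneg Λ), Real.sqrt_sq hΛpos.le]
      calc C0 * Real.sqrt p * (∑' k : ℤ, ‖A k‖ ^ 2) ^ ((1:ℝ) / 2)
          ≤ C0 * Real.sqrt p * (Λ * Real.sqrt Ssq) :=
            mul_le_mul_of_nonneg_left hrp (by positivity)
        _ = (C0 * Real.sqrt Ssq) * Real.sqrt p * Λ := by ring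
        _ ≤ C * Real.sqrt p * Λ := by
            have h1 : C0 * Real.sqrt Ssq ≤ C := by rw [hC_def]; linarith
            exact mul_le_mul_of_nonneg_right
              (mul_le_mul_of_nonneg_right h1 (Real.sqrt_nonneg p)) hΛpos.le
    refine ⟨hmom, ?_⟩
    intro α hα
    have hXmeas : Measurable (fun ω => ∑' k : ℤ, gk k ω * A k) :=
      aux_meas_tsum _ (fun k => (hmeas k).mul_const (A k))
    set β : ℝ := α / (C * Real.exp 1 * Λ) with hβ_def
    have hβpos : 0 < β := div_pos hα (by positivity)
    rcases lt_or_ge (β ^ 2) 2 with hb2 | hb2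
    · have h1 : (volume {ω : Ω | α < ‖∑' k : ℤ, gk k ω * A k‖}).toReal ≤ 1 := by
        have hle : volume {ω : Ω | α < ‖∑' k : ℤ, gk k ω * A k‖} ≤ volume (Set.univ : Set Ω) :=
          measure_mono (Set.subset_univ _)
        rw [measure_univ] at hle
        exact (ENNReal.toReal_mono ENNReal.one_ne_top hle).trans_eq ENNReal.toReal_one
      have h2 : (1:ℝ) ≤ Real.exp 2 * Real.exp (-β ^ 2) := by
        rw [← Real.exp_add]
        calc (1:ℝ) = Real.exp 0 := Real.exp_zero.symm
          _ ≤ _ := Real.exp_le_exp.mpr (by linarith)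
      exact h1.trans h2
    · set p : ℝ := β ^ 2 with hp_def
      have hppos : (0:ℝ) < p := lt_of_lt_of_le two_pos hb2
      have hmomp := hmom p hb2
      have hp0 : (ENNReal.ofReal p) ≠ 0 := by
        simp only [ne_eq, ENNReal.ofReal_eq_zero, not_le]
        exact hppos
      have hsubset : {ω : Ω | α < ‖∑' k : ℤ, gk k ω * A k‖} ⊆
          {ω : Ω | ENNReal.ofReal α ≤ (‖∑' k : ℤ, gk k ω * A k‖₊ : ℝ≥0∞)} := by
        intro ω hω
        simp only [Set.mem_setOf_eq] at hω ⊢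
        rw [← ENNReal.ofReal_coe_nnreal, coe_nnnorm]
        exact ENNReal.ofReal_le_ofReal hω.le
      have hcheb := meas_ge_le_mul_pow_eLpNorm_enorm (volume : Measure Ω) hp0 ENNReal.ofReal_ne_top
        hXmeas.aestronglyMeasurable (ε := ENNReal.ofReal α)
        (ne_of_gt (ENNReal.ofReal_pos.mpr hα)) (fun h => absurd h ENNReal.ofReal_ne_top)
      have htoR : (ENNReal.ofReal p).toReal = p := ENNReal.toReal_ofReal hppos.le
      have hsqrtp : Real.sqrt p = β := by rw [hp_def, Real.sqrt_sq hβpos.le]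
      have hratio : (C * Real.sqrt p * Λ) / α = (Real.exp 1)⁻¹ := by
        rw [hsqrtp, hβ_def]
        field_simp
      have hchain : volume {ω : Ω | α < ‖∑' k : ℤ, gk k ω * A k‖} ≤
          ENNReal.ofReal (Real.exp (-β ^ 2)) := by
        refine (measure_mono hsubset).trans (hcheb.trans ?_)
        rw [htoR]
        calc (ENNReal.ofReal α)⁻¹ ^ p *
              eLpNorm (fun ω => ∑' k : ℤ, gk k ω * A k) (ENNReal.ofReal p) volume ^ p
            ≤ (ENNReal.ofReal α)⁻¹ ^ p * (ENNReal.ofReal (C * Real.sqrt p * Λ)) ^ p :=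
              mul_le_mul_right (ENNReal.rpow_le_rpow hmomp hppos.le) _
          _ = ((ENNReal.ofReal α)⁻¹ * ENNReal.ofReal (C * Real.sqrt p * Λ)) ^ p :=
              (ENNReal.mul_rpow_of_nonneg _ _ hppos.le).symm
          _ = (ENNReal.ofReal ((C * Real.sqrt p * Λ) / α)) ^ p := by
              rw [ENNReal.ofReal_div_of_pos hα, ENNReal.div_eq_inv_mul]
          _ = ENNReal.ofReal (((C * Real.sqrt p * Λ) / α) ^ p) :=
              ENNReal.ofReal_rpow_of_nonneg (by positivity) hppos.le
          _ = ENNReal.ofReal (Real.exp (-β ^ 2)) := by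
              rw [hratio]
              congr 1
              have he : (Real.exp 1)⁻¹ = Real.exp (-1) := by
                rw [Real.exp_neg]
              rw [he, Real.rpow_def_of_pos (Real.exp_pos _), Real.log_exp]
              rw [hp_def]
              ring_nf
      calc (volume {ω : Ω | α < ‖∑' k : ℤ, gk k ω * A k‖}).toReal
          ≤ (ENNReal.ofReal (Real.exp (-β ^ 2))).toReal :=
            ENNReal.toReal_mono ENNReal.ofReal_ne_top hchain
        _ = Real.exp (-β ^ 2) := ENNReal.toReal_ofReal (Real.exp_nonneg _)
        _ ≤ Real.exp 2 * Real.exp (-β ^ 2) := by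
            have h1 : (1:ℝ) ≤ Real.exp 2 := by
              calc (1:ℝ) = Real.exp 0 := Real.exp_zero.symm
                _ ≤ Real.exp 2 := Real.exp_le_exp.mpr (by norm_num)
            nlinarith [Real.exp_nonneg (-β ^ 2)]
      done
  exact key (fun k : ℤ => (((2 * Real.pi : ℝ) ^ (-(1 : ℝ) / 2) : ℝ) : ℂ) *
    ∫ ξ : ℝ, Complex.exp (Complex.I * x * ξ) * (Complex.exp (Complex.I * t * (ξ ^ 3 + 1 / ξ)) - 1) * (ψ (ξ - k) : ℂ) * fourierTr (fun y => g y) ξ) hcore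
end
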